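/- arXiv:2007.06850 — 4 statements merged into one kernel-verified Lean document; each statement's English description precedes it below -/
import Mathlib

section
/- If an opinion aggregation function satisfies narrow unanimity and monotonicity, and its domain is closed under changing all agents' valuations on a single statement to a common constant, then it satisfies sided unanimity. -/
open scoped BigOperators

/-- A directed relational framework: statements `S`, relationships `R`,
each relationship has a set of source statements (`src r s` means `s` is a source of `r`)
and a destination statement `dst r`. -/
structure DRF where
  S : Type
  R : Type
  [fintypeS : Fintype S]
  [fintypeR : Fintype R]
  [deceqS : DecidableEq S]
  src : R → S → Bool
  dst : R → S

attribute [instance] DRF.fintypeS DRF.fintypeR DRF.deceqS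

/-- An opinion: a valuation on statements and an acceptance function on relationships. -/
structure Opinion (D : DRF) where
  v : D.S → ℝ
  w : D.R → ℝ

/-- The set `R⁺(s)` of relationships outgoing from `s`. -/
def DRF.Rplus (D : DRF) (s : D.S) : Finset D.R :=
  Finset.univ.filter (fun r => D.src r s = true)

/-- The estimation function: `v s` when there are no outgoing relationships or the
acceptances sum to `0`, otherwise the `w`-weighted average of `v` over descendants. -/
noncomputable def est {D : DRF} (O : Opinion D) (s : D.S) : ℝ :=
  if (∑ r ∈ D.Rplus s, O.w r) = 0 then O.v s
  else (∑ r ∈ D.Rplus s, O.w r * O.v (D.dst r)) / (∑ r ∈ D.Rplus s, O.w r)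

/-- ε-coherence of an opinion. -/
def Coherent {D : DRF} (ε : ℝ) (O : Opinion D) : Prop :=
  ∀ s : D.S, |O.v s - est O s| < ε

/-- An opinion profile for `n` agents. -/
abbrev Profile (D : DRF) (n : ℕ) := Fin n → Opinion D

/-- Aggregated (direct) valuation: pointwise average. -/
noncomputable def directV {D : DRF} {n : ℕ} (P : Profile D n) (s : D.S) : ℝ :=
  (∑ i, (P i).v s) / n

/-- Aggregated acceptance: pointwise average. -/
noncomputable def directW {D : DRF} {n : ℕ} (P : Profile D n) (r : D.R) : ℝ :=
  (∑ i, (P i).w r) / n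

/-- The direct aggregation function. -/
noncomputable def direct {D : DRF} {n : ℕ} (P : Profile D n) : Opinion D :=
  ⟨directV P, directW P⟩

/-- Aggregated (indirect) valuation: average of individual estimations. -/
noncomputable def indirectV {D : DRF} {n : ℕ} (P : Profile D n) (s : D.S) : ℝ :=
  (∑ i, est (P i) s) / n

/-- The indirect aggregation function. -/
noncomputable def indirect {D : DRF} {n : ℕ} (P : Profile D n) : Opinion D :=
  ⟨indirectV P, directW P⟩

/-- Replace an opinion's valuation on a single statement by a constant. -/
noncomputable def updOp {D : DRF} (O : Opinion D) (s : D.S) (lam : ℝ) : Opinion D :=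
  ⟨Function.update O.v s lam, O.w⟩

/-!
If every agent values `s` above some `lam`, replacing all their values on `s` by `lam` stays in
the domain, where narrow unanimity fixes the aggregate at `lam`; monotonicity then gives
`lam ≤ F(P)(s)`. With finitely many agents, unanimous positivity yields such a `lam > 0`,
and symmetrically for negativity.
-/

section Aggregation

variable {D : DRF} {n : ℕ}

def NarrowUnanimity (Dom : Set (Profile D n)) (F : Profile D n → Opinion D) : Prop :=
  ∀ P ∈ Dom, ∀ s : D.S, ∀ lam : ℝ, (∀ i, (P i).v s = lam) → (F P).v s = lam

def Monotonicity (Dom : Set (Profile D n)) (F : Profile D n → Opinion D) : Prop :=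
  ∀ P ∈ Dom, ∀ P' ∈ Dom, ∀ s : D.S,
    (∀ i, (P i).v s ≤ (P' i).v s) → (F P).v s ≤ (F P').v s

def ClosedUnderConstUpdate (Dom : Set (Profile D n)) : Prop :=
  ∀ P ∈ Dom, ∀ s : D.S, ∀ lam : ℝ, (fun i => updOp (P i) s lam) ∈ Dom

@[simp]
theorem updOp_v_self (O : Opinion D) (s : D.S) (lam : ℝ) : (updOp O s lam).v s = lam := by
  simp [updOp]

variable {Dom : Set (Profile D n)} {F : Profile D n → Opinion D}
  (hNU : NarrowUnanimity Dom F) (hM : Monotonicity Dom F) (hClosed : ClosedUnderConstUpdate Dom)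
include hNU hM hClosed

theorem le_aggregate_of_forall_le {P : Profile D n} (hP : P ∈ Dom) {s : D.S} {lam : ℝ}
    (h : ∀ i, lam ≤ (P i).v s) : lam ≤ (F P).v s := by
  have hmem := hClosed P hP s lam
  calc lam = (F fun i => updOp (P i) s lam).v s :=
        (hNU _ hmem s lam fun i => updOp_v_self _ _ _).symm
    _ ≤ (F P).v s := hM _ hmem P hP s fun i => by simpa using h i

theorem aggregate_le_of_forall_le {P : Profile D n} (hP : P ∈ Dom) {s : D.S} {lam : ℝ}
    (h : ∀ i, (P i).v s ≤ lam) : (F P).v s ≤ lam := by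
  have hmem := hClosed P hP s lam
  calc (F P).v s ≤ (F fun i => updOp (P i) s lam).v s :=
        hM P hP _ hmem s fun i => by simpa using h i
    _ = lam := hNU _ hmem s lam fun i => updOp_v_self _ _ _

end Aggregation

/-- Narrow unanimity and monotonicity, with a domain closed under setting all agents'
valuations on a single statement to a common constant, imply sided unanimity. -/
theorem narrow_unanimity_and_monotonicity_imply_sided_unanimity
    (D : DRF) (n : ℕ) (Dom : Set (Profile D n)) (F : Profile D n → Opinion D)
    (hNU : ∀ P ∈ Dom, ∀ s : D.S, ∀ lam : ℝ, (∀ i, (P i).v s = lam) → (F P).v s = lam)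
    (hM : ∀ P ∈ Dom, ∀ P' ∈ Dom, ∀ s : D.S,
      (∀ i, (P i).v s ≤ (P' i).v s) → (F P).v s ≤ (F P').v s)
    (hClosed : ∀ P ∈ Dom, ∀ s : D.S, ∀ lam : ℝ,
      (fun i => updOp (P i) s lam) ∈ Dom) :
    ∀ P ∈ Dom, ∀ s : D.S,
      ((∀ i, 0 < (P i).v s) → 0 < (F P).v s) ∧
      ((∀ i, (P i).v s < 0) → (F P).v s < 0) := by
  intro P hP s
  constructor
  · intro hpos
    -- a common positive lower bound, found in the codirected order `Set.Ioi 0`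
    obtain ⟨⟨lam, hlam⟩, hle⟩ :=
      Finite.exists_ge fun i => (⟨_, hpos i⟩ : Set.Ioi (0 : ℝ))
    exact lt_of_lt_of_le hlam (le_aggregate_of_forall_le hNU hM hClosed hP hle)
  · intro hneg
    obtain ⟨⟨lam, hlam⟩, hle⟩ :=
      Finite.exists_le fun i => (⟨_, hneg i⟩ : Set.Iio (0 : ℝ))
    exact lt_of_le_of_lt (aggregate_le_of_forall_le hNU hM hClosed hP hle) hlam
end

section
/- For the α-recursive aggregation R_α = αD + (1-α)R, the coherence gap at each statement satisfies v_{R_α(P)}(s) - e_{R_α(P)}(s) = α·(v_{D(P)}(s) - e_{D(P)}(s)); consequently, since |v_{D(P)}(s) - e_{D(P)}(s)| ≤ 2 (valuations lie in [-1,1]), R_α satisfies ε-collective coherence whenever α < ε/2. -/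
open scoped BigOperators

/-! For a fixed acceptance function the estimation `est` is linear in the valuation, also in
the degenerate case where it returns the valuation itself. The recursive valuation is its own
estimation, so in the gap of `α v_D + (1 - α) v_R` only `α` times the gap of `v_D` survives.
Valuations in `[-1, 1]` and nonnegative acceptances keep both `v_D` and its estimation in
`[-1, 1]`, so that gap is at most `2`. -/

theorem abs_sum_mul_div_sum_le {ι : Type*} {s : Finset ι} {w v : ι → ℝ} {M : ℝ}
    (hw : ∀ i ∈ s, 0 ≤ w i) (hv : ∀ i ∈ s, |v i| ≤ M) (hM : 0 ≤ M) :
    |(∑ i ∈ s, w i * v i) / (∑ i ∈ s, w i)| ≤ M := by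
  have hW : 0 ≤ ∑ i ∈ s, w i := Finset.sum_nonneg hw
  rw [abs_div, abs_of_nonneg hW]
  refine div_le_of_le_mul₀ hW hM ?_
  calc |∑ i ∈ s, w i * v i| ≤ ∑ i ∈ s, w i * |v i| := by
        refine (Finset.abs_sum_le_sum_abs _ _).trans_eq (Finset.sum_congr rfl fun i hi => ?_)
        rw [abs_mul, abs_of_nonneg (hw i hi)]
    _ ≤ ∑ i ∈ s, w i * M :=
        Finset.sum_le_sum fun i hi => mul_le_mul_of_nonneg_left (hv i hi) (hw i hi)
    _ = M * ∑ i ∈ s, w i := by rw [← Finset.sum_mul, mul_comm]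

theorem abs_sum_div_card_le {n : ℕ} {f : Fin n → ℝ} {M : ℝ} (hf : ∀ i, |f i| ≤ M)
    (hM : 0 ≤ M) : |(∑ i, f i) / n| ≤ M := by
  simpa using abs_sum_mul_div_sum_le (s := Finset.univ) (w := fun _ => (1 : ℝ))
    (fun _ _ => zero_le_one) (fun i _ => hf i) hM

section Estimation

variable {D : DRF}

theorem est_linear_combination (w : D.R → ℝ) (u v : D.S → ℝ) (a b : ℝ) (s : D.S) :
    est (⟨fun t => a * u t + b * v t, w⟩ : Opinion D) s =
      a * est (⟨u, w⟩ : Opinion D) s + b * est (⟨v, w⟩ : Opinion D) s := by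
  unfold est
  split_ifs
  · rfl
  · simp only [mul_add, Finset.sum_add_distrib, mul_left_comm _ a, mul_left_comm _ b,
      ← Finset.mul_sum]
    field_simp

theorem est_eq_self_of_recursive {w : D.R → ℝ} {v : D.S → ℝ}
    (hrec : ∀ s : D.S, (D.Rplus s).Nonempty →
      v s = (∑ r ∈ D.Rplus s, w r * v (D.dst r)) / (∑ r ∈ D.Rplus s, w r))
    (s : D.S) : est (⟨v, w⟩ : Opinion D) s = v s := by
  unfold est
  split_ifs with hW
  · rfl
  · exact (hrec s (Finset.nonempty_of_sum_ne_zero hW)).symm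

theorem sub_est_convex_combination_of_recursive {w : D.R → ℝ} {u v : D.S → ℝ}
    (hrec : ∀ s : D.S, (D.Rplus s).Nonempty →
      v s = (∑ r ∈ D.Rplus s, w r * v (D.dst r)) / (∑ r ∈ D.Rplus s, w r))
    (α : ℝ) (s : D.S) :
    (α * u s + (1 - α) * v s) - est (⟨fun t => α * u t + (1 - α) * v t, w⟩ : Opinion D) s =
      α * (u s - est (⟨u, w⟩ : Opinion D) s) := by
  rw [est_linear_combination, est_eq_self_of_recursive hrec]
  ring

theorem abs_est_le {O : Opinion D} {M : ℝ} (hw : ∀ r, 0 ≤ O.w r)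
    (hv : ∀ t, |O.v t| ≤ M) (hM : 0 ≤ M) (s : D.S) : |est O s| ≤ M := by
  unfold est
  split_ifs
  · exact hv s
  · exact abs_sum_mul_div_sum_le (fun r _ => hw r) (fun r _ => hv (D.dst r)) hM

theorem abs_sub_est_le {O : Opinion D} {M : ℝ} (hw : ∀ r, 0 ≤ O.w r)
    (hv : ∀ t, |O.v t| ≤ M) (hM : 0 ≤ M) (s : D.S) : |O.v s - est O s| ≤ 2 * M := by
  linarith [abs_sub (O.v s) (est O s), hv s, abs_est_le hw hv hM s]

end Estimation

theorem alpha_recursive_coherence_gap_general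
    (D : DRF) (n : ℕ) (P : Profile D n)
    (hv : ∀ i s, (P i).v s ∈ Set.Icc (-1 : ℝ) 1)
    (hw : ∀ i r, 0 ≤ (P i).w r)
    (wbar : D.R → ℝ) (hwbar : ∀ r, wbar r = (∑ i, (P i).w r) / n)
    (vD : D.S → ℝ) (hvD : ∀ s, vD s = (∑ i, (P i).v s) / n)
    (vR : D.S → ℝ)
    (hrec : ∀ s : D.S, (D.Rplus s).Nonempty →
      vR s = (∑ r ∈ D.Rplus s, wbar r * vR (D.dst r)) / (∑ r ∈ D.Rplus s, wbar r))
    (α : ℝ) (hα : α ∈ Set.Icc (0 : ℝ) 1) :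
    (∀ s : D.S,
      (α * vD s + (1 - α) * vR s) -
          est (⟨fun t => α * vD t + (1 - α) * vR t, wbar⟩ : Opinion D) s =
        α * (vD s - est (⟨vD, wbar⟩ : Opinion D) s)) ∧
    (∀ ε ∈ Set.Ioo (0 : ℝ) 1, α < ε / 2 →
      ∀ s : D.S,
        |(α * vD s + (1 - α) * vR s) -
            est (⟨fun t => α * vD t + (1 - α) * vR t, wbar⟩ : Opinion D) s| < ε) := by
  have hgap := sub_est_convex_combination_of_recursive (u := vD) hrec α
  refine ⟨hgap, fun ε _ hαε s => ?_⟩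
  have hwbar_nonneg : ∀ r, 0 ≤ wbar r := fun r =>
    (hwbar r).symm ▸ div_nonneg (Finset.sum_nonneg fun i _ => hw i r) n.cast_nonneg
  have hvD_le : ∀ t, |vD t| ≤ 1 := fun t =>
    (hvD t).symm ▸ abs_sum_div_card_le (fun i => abs_le.mpr (hv i t)) zero_le_one
  calc |(α * vD s + (1 - α) * vR s) -
          est (⟨fun t => α * vD t + (1 - α) * vR t, wbar⟩ : Opinion D) s|
      = α * |vD s - est (⟨vD, wbar⟩ : Opinion D) s| := by
        rw [hgap s, abs_mul, abs_of_nonneg hα.1]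
    _ ≤ α * (2 * 1) := mul_le_mul_of_nonneg_left
        (abs_sub_est_le (O := ⟨vD, wbar⟩) hwbar_nonneg hvD_le zero_le_one s) hα.1
    _ < ε := by linarith

/-- The coherence gap of the α-recursive aggregation equals α times the gap of the
direct aggregation; hence `R_α` is ε-collectively coherent whenever `α < ε/2`. -/
theorem alpha_recursive_coherence_gap
    (D : DRF) (n : ℕ) (hn : 0 < n) (P : Profile D n)
    (hv : ∀ i s, (P i).v s ∈ Set.Icc (-1 : ℝ) 1)
    (hw : ∀ i r, 0 ≤ (P i).w r)
    (wbar : D.R → ℝ) (hwbar : ∀ r, wbar r = (∑ i, (P i).w r) / n)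
    (hpos : ∀ s : D.S, (D.Rplus s).Nonempty → 0 < ∑ r ∈ D.Rplus s, wbar r)
    (vD : D.S → ℝ) (hvD : ∀ s, vD s = (∑ i, (P i).v s) / n)
    (vR : D.S → ℝ)
    (hleaf : ∀ s : D.S, D.Rplus s = ∅ → vR s = vD s)
    (hrec : ∀ s : D.S, (D.Rplus s).Nonempty →
      vR s = (∑ r ∈ D.Rplus s, wbar r * vR (D.dst r)) / (∑ r ∈ D.Rplus s, wbar r))
    (α : ℝ) (hα : α ∈ Set.Icc (0 : ℝ) 1) :
    (∀ s : D.S,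
      (α * vD s + (1 - α) * vR s) -
          est (⟨fun t => α * vD t + (1 - α) * vR t, wbar⟩ : Opinion D) s =
        α * (vD s - est (⟨vD, wbar⟩ : Opinion D) s)) ∧
    (∀ ε ∈ Set.Ioo (0 : ℝ) 1, α < ε / 2 →
      ∀ s : D.S,
        |(α * vD s + (1 - α) * vR s) -
            est (⟨fun t => α * vD t + (1 - α) * vR t, wbar⟩ : Opinion D) s| < ε) :=
  alpha_recursive_coherence_gap_general D n P hv hw wbar hwbar vD hvD vR hrec α hα
end

section
/- Assume every agent's opinion is ε-coherent for some ε ∈ (0,1). Then the direct aggregation D satisfies endorsed unanimity: if every agent assigns valuation 1 to every descendant of a statement s (with s having at least one descendant and each agent's acceptance sum over R⁺(s) positive), then each agent's estimation e_i(s) = 1, the ε-coherence forces v_i(s) > 1 - ε > 0 for every agent i, and hence v_{D(P)}(s) = (1/n)Σ_i v_i(s) > 0; symmetrically, full negative support yields v_{D(P)}(s) < 0. -/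
open scoped BigOperators

theorem est_eq_of_forall_dst_eq {D : DRF} {O : Opinion D} {s : D.S} {c : ℝ}
    (hw : ∑ r ∈ D.Rplus s, O.w r ≠ 0) (hv : ∀ r ∈ D.Rplus s, O.v (D.dst r) = c) :
    est O s = c := by
  rw [est, if_neg hw, Finset.sum_congr rfl fun r hr => by rw [hv r hr], ← Finset.sum_mul,
    mul_div_cancel_left₀ c hw]

theorem Coherent.est_sub_lt {D : DRF} {ε : ℝ} {O : Opinion D} (h : Coherent ε O) (s : D.S) :
    est O s - ε < O.v s := by
  linarith [(abs_lt.mp (h s)).1]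

theorem Coherent.lt_est_add {D : DRF} {ε : ℝ} {O : Opinion D} (h : Coherent ε O) (s : D.S) :
    O.v s < est O s + ε := by
  linarith [(abs_lt.mp (h s)).2]

theorem directV_pos {D : DRF} {n : ℕ} (hn : 0 < n) {P : Profile D n} {s : D.S}
    (h : ∀ i, 0 < (P i).v s) : 0 < directV P s :=
  div_pos (Finset.sum_pos (fun i _ => h i) ⟨⟨0, hn⟩, Finset.mem_univ _⟩) (Nat.cast_pos.mpr hn)

theorem directV_neg {D : DRF} {n : ℕ} (hn : 0 < n) {P : Profile D n} {s : D.S}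
    (h : ∀ i, (P i).v s < 0) : directV P s < 0 :=
  div_neg_of_neg_of_pos (Finset.sum_neg (fun i _ => h i) ⟨⟨0, hn⟩, Finset.mem_univ _⟩)
    (Nat.cast_pos.mpr hn)

theorem direct_endorsed_unanimity_of_coherent_general
    (D : DRF) (n : ℕ) (hn : 0 < n) (ε : ℝ) (hε : ε ∈ Set.Ioo (0 : ℝ) 1)
    (P : Profile D n) (hcoh : ∀ i, Coherent ε (P i)) (s : D.S)
    (hpos : ∀ i, 0 < ∑ r ∈ D.Rplus s, (P i).w r) :
    ((∀ i, ∀ r ∈ D.Rplus s, (P i).v (D.dst r) = 1) → 0 < directV P s) ∧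
    ((∀ i, ∀ r ∈ D.Rplus s, (P i).v (D.dst r) = -1) → directV P s < 0) := by
  constructor
  · intro hsupp
    refine directV_pos hn fun i => ?_
    have hv := (hcoh i).est_sub_lt s
    rw [est_eq_of_forall_dst_eq (hpos i).ne' (hsupp i)] at hv
    linarith [hε.2]
  · intro hsupp
    refine directV_neg hn fun i => ?_
    have hv := (hcoh i).lt_est_add s
    rw [est_eq_of_forall_dst_eq (hpos i).ne' (hsupp i)] at hv
    linarith [hε.2]

/-- Under ε-coherent individual opinions, the direct aggregation satisfies
endorsed unanimity. -/
theorem direct_endorsed_unanimity_of_coherent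
    (D : DRF) (n : ℕ) (hn : 0 < n) (ε : ℝ) (hε : ε ∈ Set.Ioo (0 : ℝ) 1)
    (P : Profile D n) (hcoh : ∀ i, Coherent ε (P i)) (s : D.S)
    (hne : (D.Rplus s).Nonempty)
    (hpos : ∀ i, 0 < ∑ r ∈ D.Rplus s, (P i).w r) :
    ((∀ i, ∀ r ∈ D.Rplus s, (P i).v (D.dst r) = 1) → 0 < directV P s) ∧
    ((∀ i, ∀ r ∈ D.Rplus s, (P i).v (D.dst r) = -1) → directV P s < 0) :=
  direct_endorsed_unanimity_of_coherent_general D n hn ε hε P hcoh s hpos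
end

section
/- Assume all agents share a common acceptance function (w_i(r) = λ_r > 0 for all agents i and each relationship r), and every agent's opinion is δ-coherent for some 0 < δ ≤ ε < 1. Then the direct aggregation D produces an ε-coherent collective opinion: for every statement s, |v_{D(P)}(s) - e_{D(P)}(s)| ≤ (1/n)Σ_i |v_i(s) - e_i(s)| < δ ≤ ε, using that with common acceptances, the estimation of the average equals the average of the individual estimations. -/
/-! With a shared acceptance function `w`, the estimation at `s` is the same linear map of the
valuation for every agent and for the collective (the identity if the total acceptance on `R⁺(s)`
vanishes, a fixed weighted average otherwise). So estimation commutes with averaging, the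
collective's incoherence at `s` is the average of the individual ones, and the triangle
inequality bounds it by `δ`. -/

open scoped BigOperators

section DirectAggregation

variable {D : DRF} {n : ℕ}

theorem est_eq_sum_div {ι : Type*} [Fintype ι] (O : ι → Opinion D) (A : Opinion D) (c : ℝ)
    (hw : ∀ i, (O i).w = A.w) (hv : ∀ s, A.v s = (∑ i, (O i).v s) / c) (s : D.S) :
    est A s = (∑ i, est (O i) s) / c := by
  simp only [est, hw]
  split_ifs
  · exact hv s
  · simp only [hv, Finset.mul_sum, mul_div_assoc']
    rw [← Finset.sum_div, ← Finset.sum_div, Finset.sum_comm, div_div, div_div, mul_comm c]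

theorem directW_eq_of_common {P : Profile D n} (hn : 0 < n) {lam : D.R → ℝ}
    (hcommon : ∀ i r, (P i).w r = lam r) : directW P = lam := by
  ext r
  have hn' : (n : ℝ) ≠ 0 := by exact_mod_cast hn.ne'
  simp [directW, hcommon, hn']

theorem est_direct_of_common {P : Profile D n} (hn : 0 < n) {lam : D.R → ℝ}
    (hcommon : ∀ i r, (P i).w r = lam r) (s : D.S) :
    est (direct P) s = (∑ i, est (P i) s) / n :=
  est_eq_sum_div P (direct P) n
    (fun i => by ext r; simp [direct, directW_eq_of_common hn hcommon, hcommon]) (fun _ => rfl) s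

theorem abs_direct_sub_est_le {P : Profile D n} (hn : 0 < n) {lam : D.R → ℝ}
    (hcommon : ∀ i r, (P i).w r = lam r) (s : D.S) :
    |(direct P).v s - est (direct P) s| ≤ (∑ i, |(P i).v s - est (P i) s|) / n := by
  have hv : (direct P).v s = (∑ i, (P i).v s) / n := rfl
  rw [hv, est_direct_of_common hn hcommon, ← sub_div, ← Finset.sum_sub_distrib, abs_div,
    Nat.abs_cast]
  gcongr
  exact Finset.abs_sum_le_sum_abs _ _

theorem Coherent.mono {O : Opinion D} {δ ε : ℝ} (h : Coherent δ O) (hδε : δ ≤ ε) :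
    Coherent ε O :=
  fun s => (h s).trans_le hδε

theorem coherent_direct_of_common {P : Profile D n} (hn : 0 < n) {lam : D.R → ℝ}
    (hcommon : ∀ i r, (P i).w r = lam r) {δ : ℝ} (hcoh : ∀ i, Coherent δ (P i)) :
    Coherent δ (direct P) := by
  intro s
  have hn' : (0 : ℝ) < n := by exact_mod_cast hn
  have hsum : ∑ i, |(P i).v s - est (P i) s| < n * δ := by
    calc ∑ i, |(P i).v s - est (P i) s| < ∑ _i : Fin n, δ :=
          Finset.sum_lt_sum_of_nonempty ⟨⟨0, hn⟩, Finset.mem_univ _⟩ fun i _ => hcoh i s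
      _ = n * δ := by simp
  calc |(direct P).v s - est (direct P) s| ≤ (∑ i, |(P i).v s - est (P i) s|) / n :=
        abs_direct_sub_est_le hn hcommon s
    _ < δ := by rwa [div_lt_iff₀' hn']

end DirectAggregation

theorem direct_collective_coherence_common_acceptance_general
    (D : DRF) (n : ℕ) (hn : 0 < n) (P : Profile D n)
    (lam : D.R → ℝ)
    (hcommon : ∀ i r, (P i).w r = lam r)
    (δ ε : ℝ) (hδε : δ ≤ ε)
    (hcoh : ∀ i, Coherent δ (P i)) :
    Coherent ε (direct P) :=
  (coherent_direct_of_common hn hcommon hcoh).mono hδε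

/-- With a common positive acceptance function and δ-coherent individual opinions
(0 < δ ≤ ε < 1), the direct aggregation produces an ε-coherent collective opinion. -/
theorem direct_collective_coherence_common_acceptance
    (D : DRF) (n : ℕ) (hn : 0 < n) (P : Profile D n)
    (lam : D.R → ℝ) (hlam : ∀ r, 0 < lam r)
    (hcommon : ∀ i r, (P i).w r = lam r)
    (δ ε : ℝ) (hδ : 0 < δ) (hδε : δ ≤ ε) (hε1 : ε < 1)
    (hcoh : ∀ i, Coherent δ (P i)) :
    Coherent ε (direct P) :=
  direct_collective_coherence_common_acceptance_general D n hn P lam hcommon δ ε hδε hcoh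
end
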